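/- arXiv:1108.5341 — 4 statements merged into one kernel-verified Lean document; each statement's English description precedes it below -/
import Mathlib

section
/- Let ν be a probability measure on a measurable space and f a measurable function with 0 ≤ f ≤ M ν-almost-everywhere, M > 0. Then −log ∫ e^{−f} dν ≥ (1 − e^{−M})/M · ∫ f dν. Equivalently, ∫ f dν ≤ M/(1 − e^{−M}) · (−log ∫ e^{−f} dν). -/
/-!
On `[-M, 0]` the convex function `exp` lies below its chord, so integrating
`e^{-f} ≤ 1 - c f` with `c = (1 - e^{-M}) / M` gives `∫ e^{-f} dν ≤ 1 - c ∫ f dν`;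
the bound `log x ≤ x - 1` turns this into `c ∫ f dν ≤ -log ∫ e^{-f} dν`.
-/

open MeasureTheory

theorem ConvexOn.le_secant {g : ℝ → ℝ} {a b t : ℝ} (hg : ConvexOn ℝ (Set.Icc a b) g)
    (hab : a < b) (ht : t ∈ Set.Icc a b) : g t ≤ g a + (g b - g a) / (b - a) * (t - a) := by
  rcases ht.1.eq_or_lt with rfl | hat
  · simp
  have ha : a ∈ Set.Icc a b := Set.left_mem_Icc.2 hab.le
  have hslope := hg.secant_mono ha ht (Set.right_mem_Icc.2 hab.le) hat.ne' hab.ne' ht.2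
  rw [div_le_iff₀ (sub_pos.2 hat)] at hslope
  linarith

theorem ConvexOn.integral_comp_le_secant {Ω : Type*} [MeasurableSpace Ω] {μ : Measure Ω}
    [IsProbabilityMeasure μ] {g : ℝ → ℝ} {X : Ω → ℝ} {a b : ℝ}
    (hg : ConvexOn ℝ (Set.Icc a b) g) (hab : a < b) (hX : ∀ᵐ ω ∂μ, X ω ∈ Set.Icc a b)
    (hXi : Integrable X μ) (hgX : Integrable (fun ω ↦ g (X ω)) μ) :
    ∫ ω, g (X ω) ∂μ ≤ g a + (g b - g a) / (b - a) * (∫ ω, X ω ∂μ - a) := by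
  have hlin : Integrable (fun ω ↦ (g b - g a) / (b - a) * (X ω - a)) μ :=
    (hXi.sub (integrable_const a)).const_mul _
  calc ∫ ω, g (X ω) ∂μ ≤ ∫ ω, g a + (g b - g a) / (b - a) * (X ω - a) ∂μ :=
        integral_mono_ae hgX ((integrable_const _).add hlin)
          (hX.mono fun ω hω ↦ hg.le_secant hab hω)
    _ = g a + (g b - g a) / (b - a) * (∫ ω, X ω ∂μ - a) := by
        rw [integral_add (integrable_const _) hlin,
          integral_const_mul, integral_sub hXi (integrable_const a)]
        simp

theorem integral_exp_neg_le_one_sub {Ω : Type*} [MeasurableSpace Ω] {μ : Measure Ω}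
    [IsProbabilityMeasure μ] {f : Ω → ℝ} {M : ℝ} (hM : 0 < M) (hf : Integrable f μ)
    (hbd : ∀ᵐ x ∂μ, 0 ≤ f x ∧ f x ≤ M)
    (hexp : Integrable (fun x ↦ Real.exp (-f x)) μ) :
    ∫ x, Real.exp (-f x) ∂μ ≤ 1 - (1 - Real.exp (-M)) / M * ∫ x, f x ∂μ := by
  have hconv : ConvexOn ℝ (Set.Icc (-M) 0) Real.exp :=
    convexOn_exp.subset (Set.subset_univ _) (convex_Icc _ _)
  have hbd' : ∀ᵐ x ∂μ, -f x ∈ Set.Icc (-M) 0 :=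
    hbd.mono fun x hx ↦ ⟨neg_le_neg hx.2, neg_nonpos.2 hx.1⟩
  have := hconv.integral_comp_le_secant (neg_lt_zero.2 hM) hbd' hf.neg hexp
  rw [integral_neg, Real.exp_zero] at this
  convert this using 1
  field_simp [hM.ne']
  ring

theorem Real.le_neg_log_of_le_one_sub {x y : ℝ} (hx : 0 < x) (h : x ≤ 1 - y) :
    y ≤ -Real.log x := by
  linarith [Real.log_le_sub_one_of_pos hx]

/-- If `0 ≤ f ≤ M` a.e. under a probability measure `ν`, then
`-log ∫ e^{-f} dν ≥ (1 - e^{-M})/M · ∫ f dν`, and equivalently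
`∫ f dν ≤ M/(1 - e^{-M}) · (-log ∫ e^{-f} dν)`. -/
theorem neg_log_integral_exp_neg_ge (Ω : Type*) [MeasurableSpace Ω]
    (ν : Measure Ω) [IsProbabilityMeasure ν] (f : Ω → ℝ) (M : ℝ) (hM : 0 < M)
    (hf : Measurable f) (hbd : ∀ᵐ x ∂ν, 0 ≤ f x ∧ f x ≤ M) :
    (1 - Real.exp (-M)) / M * ∫ x, f x ∂ν ≤ -Real.log (∫ x, Real.exp (-f x) ∂ν) ∧
    ∫ x, f x ∂ν ≤ M / (1 - Real.exp (-M)) * (-Real.log (∫ x, Real.exp (-f x) ∂ν)) := by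
  have hfi : Integrable f ν :=
    .of_bound hf.aestronglyMeasurable M <| hbd.mono fun x hx ↦ by
      rw [Real.norm_of_nonneg hx.1]; exact hx.2
  have hexp : Integrable (fun x ↦ Real.exp (-f x)) ν :=
    .of_bound (by fun_prop) 1 <| hbd.mono fun x hx ↦ by
      rw [Real.norm_of_nonneg (Real.exp_pos _).le, Real.exp_le_one_iff]
      linarith [hx.1]
  have hc : 0 < (1 - Real.exp (-M)) / M := div_pos (by simpa using hM) hM
  have hlog := Real.le_neg_log_of_le_one_sub (integral_exp_pos hexp)
    (integral_exp_neg_le_one_sub hM hfi hbd hexp)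
  exact ⟨hlog, by rwa [← inv_div, le_inv_mul_iff₀ hc]⟩
end

section
/- The support function difference h_{D(1)}(u) − h_{D(0)}(u) (with D(0), D(1) as above) is nonzero exactly for unit vectors u in the spherical cap cap(v, √(2η)) = {u ∈ S^{d-1} : |u − v| ≤ √(2η)}, and is bounded above by Γη everywhere. -/
/-!
The ball `B(0,Γ)` has support value `Γ` in every unit direction `u`, attained only at `Γu`.
A compact subset of the ball therefore has support value `Γ` at `u` exactly when it contains `Γu`;
for the truncated ball this means `⟨u,v⟩ ≤ 1 - η`, which is the complement of the cap.
Since `Γ(1-η)u` always lies in the truncated ball, the difference is at most `Γη`.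
-/

open scoped RealInnerProductSpace

/-- The support function of a set `K`, `h_K(u) = sup_{x ∈ K} ⟨x, u⟩`. -/
noncomputable def suppFn {E : Type*} [NormedAddCommGroup E] [InnerProductSpace ℝ E]
    (K : Set E) (u : E) : ℝ :=
  sSup ((fun x => ⟪x, u⟫) '' K)

open Metric Set

section

variable {E : Type*} [NormedAddCommGroup E] [InnerProductSpace ℝ E]

lemma inner_le_of_mem_closedBall_zero {x u : E} {Γ : ℝ} (hx : x ∈ closedBall 0 Γ)
    (hu : ‖u‖ = 1) : ⟪x, u⟫ ≤ Γ :=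
  calc ⟪x, u⟫ ≤ ‖x‖ * ‖u‖ := real_inner_le_norm x u
    _ ≤ Γ := by rw [hu, mul_one]; exact mem_closedBall_zero_iff.mp hx

lemma eq_smul_of_inner_eq_of_norm_le {x u : E} {Γ : ℝ} (hx : ‖x‖ ≤ Γ) (hu : ‖u‖ = 1)
    (h : ⟪x, u⟫ = Γ) : x = Γ • u := by
  have hnorm : ‖x‖ = Γ :=
    le_antisymm hx (h ▸ (real_inner_le_norm x u).trans_eq (by rw [hu, mul_one]))
  have hcs : ⟪x, u⟫ = ‖x‖ * ‖u‖ := by rw [h, hu, hnorm, mul_one]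
  simpa [hu, hnorm] using inner_eq_norm_mul_iff_real.mp hcs

lemma bddAbove_inner_image_of_subset_closedBall {K : Set E} {u : E} {Γ : ℝ}
    (hK : K ⊆ closedBall 0 Γ) (hu : ‖u‖ = 1) : BddAbove ((fun x => ⟪x, u⟫) '' K) :=
  ⟨Γ, forall_mem_image.mpr fun _ hx => inner_le_of_mem_closedBall_zero (hK hx) hu⟩

lemma inner_le_suppFn {K : Set E} {x u : E} {Γ : ℝ} (hK : K ⊆ closedBall 0 Γ)
    (hu : ‖u‖ = 1) (hx : x ∈ K) : ⟪x, u⟫ ≤ suppFn K u :=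
  le_csSup (bddAbove_inner_image_of_subset_closedBall hK hu) (mem_image_of_mem _ hx)

lemma suppFn_le_of_subset_closedBall {K : Set E} {u : E} {Γ : ℝ} (hK : K ⊆ closedBall 0 Γ)
    (hne : K.Nonempty) (hu : ‖u‖ = 1) : suppFn K u ≤ Γ :=
  csSup_le (hne.image _)
    (forall_mem_image.mpr fun _ hx => inner_le_of_mem_closedBall_zero (hK hx) hu)

lemma suppFn_eq_of_smul_mem {K : Set E} {u : E} {Γ : ℝ} (hK : K ⊆ closedBall 0 Γ)
    (hu : ‖u‖ = 1) (h : Γ • u ∈ K) : suppFn K u = Γ := by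
  refine le_antisymm (suppFn_le_of_subset_closedBall hK ⟨_, h⟩ hu) ?_
  simpa [real_inner_smul_left, hu] using inner_le_suppFn hK hu h

lemma suppFn_closedBall_zero {u : E} {Γ : ℝ} (hu : ‖u‖ = 1) (hΓ : 0 ≤ Γ) :
    suppFn (closedBall 0 Γ) u = Γ :=
  suppFn_eq_of_smul_mem Subset.rfl hu (by simp [norm_smul, hu, abs_of_nonneg hΓ])

lemma suppFn_eq_iff_smul_mem [ProperSpace E] {K : Set E} {u : E} {Γ : ℝ}
    (hKc : IsClosed K) (hK : K ⊆ closedBall 0 Γ) (hne : K.Nonempty) (hu : ‖u‖ = 1) :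
    suppFn K u = Γ ↔ Γ • u ∈ K := by
  refine ⟨fun h => ?_, suppFn_eq_of_smul_mem hK hu⟩
  have hcompact : IsCompact ((fun x => ⟪x, u⟫) '' K) :=
    ((isCompact_closedBall 0 Γ).of_isClosed_subset hKc hK).image (by fun_prop)
  obtain ⟨x, hx, hxu⟩ := hcompact.sSup_mem (hne.image _)
  have hxΓ : ⟪x, u⟫ = Γ := hxu.trans h
  rwa [← eq_smul_of_inner_eq_of_norm_le (mem_closedBall_zero_iff.mp (hK hx)) hu hxΓ]

lemma smul_mem_closedBall_inter_halfspace_iff {u v : E} {Γ c b : ℝ} (hu : ‖u‖ = 1)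
    (hΓ : 0 < Γ) (hc0 : 0 ≤ c) (hc1 : c ≤ 1) :
    (Γ * c) • u ∈ closedBall 0 Γ ∩ {x | ⟪x, v⟫ ≤ Γ * b} ↔ c * ⟪u, v⟫ ≤ b := by
  have hnorm : ‖(Γ * c) • u‖ ≤ Γ := by
    rw [norm_smul, hu, mul_one, Real.norm_of_nonneg (by positivity)]
    exact mul_le_of_le_one_right hΓ.le hc1
  simp only [mem_inter_iff, mem_closedBall_zero_iff, hnorm, true_and, mem_ofPred_eq,
    real_inner_smul_left]
  rw [mul_assoc, mul_le_mul_iff_of_pos_left hΓ]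

lemma norm_sub_lt_sqrt_two_mul_iff {u v : E} {η : ℝ} (hu : ‖u‖ = 1) (hv : ‖v‖ = 1) :
    ‖u - v‖ < Real.sqrt (2 * η) ↔ 1 - η < ⟪u, v⟫ := by
  have hsq : ‖u - v‖ ^ 2 = 2 - 2 * ⟪u, v⟫ := by rw [norm_sub_sq_real, hu, hv]; ring
  rw [Real.lt_sqrt (norm_nonneg _), hsq]
  constructor <;> intro h <;> linarith

end

theorem suppFn_diff_cap_support_general (d : ℕ)
    (v u : EuclideanSpace ℝ (Fin d)) (η Γ : ℝ)
    (hv : ‖v‖ = 1) (hu : ‖u‖ = 1) (hη : 0 < η) (hη8 : η ≤ 1 / 8) (hΓ : 0 < Γ) :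
    let D0 := Metric.closedBall (0 : EuclideanSpace ℝ (Fin d)) Γ ∩
      {x : EuclideanSpace ℝ (Fin d) | ⟪x, v⟫ ≤ Γ * (1 - η)}
    let D1 := Metric.closedBall (0 : EuclideanSpace ℝ (Fin d)) Γ
    (suppFn D1 u - suppFn D0 u ≠ 0 ↔ ‖u - v‖ < Real.sqrt (2 * η)) ∧
    suppFn D1 u - suppFn D0 u ≤ Γ * η := by
  intro D0 D1
  have hD0 : D0 ⊆ closedBall 0 Γ := inter_subset_left
  have hD0closed : IsClosed D0 :=
    isClosed_closedBall.inter (isClosed_le (by fun_prop) continuous_const)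
  have hmem : ∀ c, 0 ≤ c → c ≤ 1 → ((Γ * c) • u ∈ D0 ↔ c * ⟪u, v⟫ ≤ 1 - η) :=
    fun c hc0 hc1 => smul_mem_closedBall_inter_halfspace_iff hu hΓ hc0 hc1
  have hΓu : Γ • u ∈ D0 ↔ ⟪u, v⟫ ≤ 1 - η := by simpa using hmem 1 zero_le_one le_rfl
  have hlow : (Γ * (1 - η)) • u ∈ D0 := by
    have hinner : ⟪u, v⟫ ≤ 1 := (real_inner_le_norm u v).trans_eq (by rw [hu, hv, one_mul])
    exact (hmem _ (by linarith) (by linarith)).mpr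
      (mul_le_of_le_one_right (by linarith) hinner)
  have hD1 : suppFn D1 u = Γ := suppFn_closedBall_zero hu hΓ.le
  refine ⟨?_, ?_⟩
  · rw [hD1, sub_ne_zero, ne_comm, Ne,
      suppFn_eq_iff_smul_mem hD0closed hD0 ⟨_, hlow⟩ hu, hΓu, not_le,
      norm_sub_lt_sqrt_two_mul_iff hu hv]
  · have hD0_ge := inner_le_suppFn hD0 hu hlow
    rw [real_inner_smul_left, real_inner_self_eq_norm_sq, hu, one_pow, mul_one] at hD0_ge
    rw [hD1]
    linarith

/-- The support function difference between the ball `B(0,Γ)` and the truncated ball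
is nonzero exactly for unit vectors in the spherical cap `{u : ‖u - v‖ < √(2η)}`, and
is everywhere bounded above by `Γη`. -/
theorem suppFn_diff_cap_support (d : ℕ) (hd : 1 ≤ d)
    (v u : EuclideanSpace ℝ (Fin d)) (η Γ : ℝ)
    (hv : ‖v‖ = 1) (hu : ‖u‖ = 1) (hη : 0 < η) (hη8 : η ≤ 1 / 8) (hΓ : 0 < Γ) :
    let D0 := Metric.closedBall (0 : EuclideanSpace ℝ (Fin d)) Γ ∩
      {x : EuclideanSpace ℝ (Fin d) | ⟪x, v⟫ ≤ Γ * (1 - η)}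
    let D1 := Metric.closedBall (0 : EuclideanSpace ℝ (Fin d)) Γ
    (suppFn D1 u - suppFn D0 u ≠ 0 ↔ ‖u - v‖ < Real.sqrt (2 * η)) ∧
    suppFn D1 u - suppFn D0 u ≤ Γ * η :=
  suppFn_diff_cap_support_general d v u η Γ hv hu hη hη8 hΓ
end

section
/- If k ≥ (2/log 2)·m·d·log((2/log 2)·m) for integers m ≥ 1, d ≥ 1, then the binomial sum satisfies C(k,0) + C(k,1) + ⋯ + C(k,d) < 2^{k/m}. -/
/-! With `r = d / k`, the truncated binomial sum is at most `r⁻ᵈ (1 + r)ᵏ < eᵈ r⁻ᵈ = (e k / d)ᵈ`.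
Writing `x = k / d` and `s = (2 / log 2) m`, the hypothesis reads `s log s ≤ x`, and then
`1 + log x ≤ log s + x / s ≤ 2 x / s` (the first step is `log (x / s) ≤ x / s - 1`), which is
exactly `(e x)ᵈ ≤ 2 ^ (k / m)` after taking logarithms. -/

open Finset Real

theorem sum_range_choose_mul_pow_le_one_add_pow {r : ℝ} (hr : 0 ≤ r) (k d : ℕ) :
    ∑ j ∈ range (d + 1), (k.choose j : ℝ) * r ^ j ≤ (1 + r) ^ k := by
  rw [add_comm 1 r, add_pow]
  simp only [one_pow, mul_one, mul_comm (r ^ _) (k.choose _ : ℝ)]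
  by_cases hdk : d ≤ k
  · exact sum_le_sum_of_subset_of_nonneg (range_subset_range.mpr (by omega))
      fun _ _ _ ↦ by positivity
  · refine (sum_subset (range_subset_range.mpr (by omega)) fun j _ hj ↦ ?_).ge
    rw [Nat.choose_eq_zero_of_lt (by simp at hj; omega), Nat.cast_zero, zero_mul]

theorem sum_range_choose_lt_exp_one_mul_div_pow {k d : ℕ} (hd : 0 < d) (hdk : d ≤ k) :
    ∑ j ∈ range (d + 1), (k.choose j : ℝ) < (exp 1 * (k / d)) ^ d := by
  have hk : (0 : ℝ) < k := by exact_mod_cast hd.trans_le hdk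
  set r : ℝ := d / k with hr
  have hr0 : 0 < r := by positivity
  have hr1 : r ≤ 1 := div_le_one_of_le₀ (by exact_mod_cast hdk) hk.le
  have hbound : (∑ j ∈ range (d + 1), (k.choose j : ℝ)) * r ^ d < exp d :=
    calc (∑ j ∈ range (d + 1), (k.choose j : ℝ)) * r ^ d
        ≤ ∑ j ∈ range (d + 1), (k.choose j : ℝ) * r ^ j := by
          rw [sum_mul]
          refine sum_le_sum fun j hj ↦ mul_le_mul_of_nonneg_left ?_ (by positivity)
          exact pow_le_pow_of_le_one hr0.le hr1 (Nat.lt_succ_iff.mp (mem_range.mp hj))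
      _ ≤ (1 + r) ^ k := sum_range_choose_mul_pow_le_one_add_pow hr0.le k d
      _ < exp r ^ k := by
          rw [add_comm]
          exact pow_lt_pow_left₀ (add_one_lt_exp hr0.ne') (by positivity) (hd.trans_le hdk).ne'
      _ = exp d := by rw [← exp_nat_mul, hr, mul_div_cancel₀ _ hk.ne']
  calc ∑ j ∈ range (d + 1), (k.choose j : ℝ) < exp d / r ^ d :=
        (lt_div_iff₀ (by positivity)).mpr hbound
    _ = (exp 1 * (k / d)) ^ d := by
        rw [← exp_one_pow, hr, mul_pow, div_pow, div_pow, div_div_eq_mul_div, mul_div_assoc]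

theorem one_add_log_le_two_mul_div {x s : ℝ} (hx : 0 < x) (hs : 0 < s) (hsx : s * log s ≤ x) :
    1 + log x ≤ 2 * x / s := by
  have htangent : log x - log s ≤ x / s - 1 := by
    rw [← log_div hx.ne' hs.ne']
    exact log_le_sub_one_of_pos (by positivity)
  have hlog : log s ≤ x / s := by rw [le_div_iff₀ hs]; linarith
  have : 2 * x / s = x / s + x / s := by ring
  linarith

theorem exp_one_lt_two_div_log_two : exp 1 < 2 / log 2 := by
  rw [lt_div_iff₀ (log_pos one_lt_two)]
  nlinarith [exp_one_lt_d9, log_two_lt_d9, log_pos one_lt_two]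

/-- If `k ≥ (2/log 2) m d log((2/log 2) m)` then `∑_{j=0}^{d} C(k,j) < 2^{k/m}`. -/
theorem binomial_sum_lt_two_rpow (m d k : ℕ) (hm : 1 ≤ m) (hd : 1 ≤ d)
    (hk : (2 / Real.log 2) * m * d * Real.log ((2 / Real.log 2) * m) ≤ (k : ℝ)) :
    (∑ j ∈ Finset.range (d + 1), (k.choose j : ℝ)) < 2 ^ ((k : ℝ) / (m : ℝ)) := by
  set s : ℝ := 2 / log 2 * m with hs
  have hm' : (1 : ℝ) ≤ m := by exact_mod_cast hm
  have hd' : (0 : ℝ) < d := by exact_mod_cast hd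
  have hes : exp 1 ≤ s := by
    nlinarith [exp_one_lt_two_div_log_two, exp_pos 1]
  have hlogs : 1 ≤ log s := (le_log_iff_exp_le (by positivity)).mpr hes
  have hsx : s * log s ≤ k / d := by
    rw [le_div_iff₀ hd']; linarith
  have hx1 : 1 ≤ (k : ℝ) / d := hsx.trans' (by nlinarith [add_one_le_exp (1 : ℝ)])
  have hx : 0 < (k : ℝ) / d := one_pos.trans_le hx1
  have hdk : d ≤ k := by exact_mod_cast (one_le_div hd').mp hx1
  calc ∑ j ∈ range (d + 1), (k.choose j : ℝ)
      < (exp 1 * (k / d)) ^ d := sum_range_choose_lt_exp_one_mul_div_pow hd hdk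
    _ = exp (d * (1 + log (k / d))) := by rw [exp_nat_mul, exp_add, exp_log hx]
    _ ≤ exp (d * (2 * (k / d) / s)) :=
        exp_le_exp.mpr (mul_le_mul_of_nonneg_left (one_add_log_le_two_mul_div hx
          (by positivity) hsx) hd'.le)
    _ = 2 ^ ((k : ℝ) / m) := by
        rw [rpow_def_of_pos two_pos, hs]
        field_simp
end

section
/- For probability measures P and Q on a common measurable space, Pinsker's inequality holds: D(P‖Q) ≥ 2·‖P − Q‖_TV², where ‖P−Q‖_TV = (1/2)∫|p − q| dμ for densities p, q with respect to a common dominating measure μ, and D(P‖Q) = ∫ p log(p/q) dμ (taken as ∞ if P is not absolutely continuous with respect to Q). -/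
/-!
The scalar inequality `3 (t - 1)² ≤ 2 (t + 2) (t log t - t + 1)` for `t ≥ 0` holds with equality at
`t = 1`, and the derivative of the difference, `4 ((t + 1) log t - 2 (t - 1))`, changes sign there
because the bracket is increasing (`log t ≥ 1 - 1/t`). With `t = p/q` it gives
`3 (p - q)² ≤ 2 (p + 2q) (p log (p/q) - p + q)` pointwise. By AM-GM this yields
`c |p - q| ≤ c² (p + 2q) / 6 + (p log (p/q) - p + q)` for every real `c`; integrating,
`c ‖p - q‖₁ ≤ c² / 2 + D(P‖Q)`, and `c = ‖p - q‖₁` gives `‖p - q‖₁² / 2 ≤ D(P‖Q)`.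
-/

open Real Set MeasureTheory InformationTheory

lemma monotoneOn_add_one_mul_log_sub_two_mul_sub_one :
    MonotoneOn (fun t : ℝ => (t + 1) * log t - 2 * (t - 1)) (Ioi 0) := by
  have hderiv : ∀ t : ℝ, 0 < t →
      HasDerivAt (fun t => (t + 1) * log t - 2 * (t - 1)) (log t + t⁻¹ - 1) t := by
    intro t ht
    refine ((((hasDerivAt_id t).add_const 1).fun_mul (hasDerivAt_log ht.ne')).sub
      (((hasDerivAt_id t).sub_const 1).const_mul 2)).congr_deriv ?_
    simp only [id]
    field_simp
    ring
  refine monotoneOn_of_deriv_nonneg (convex_Ioi 0)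
    (fun t ht => (hderiv t ht).continuousAt.continuousWithinAt)
    (fun t ht => (hderiv t (interior_Ioi.subset ht)).differentiableAt.differentiableWithinAt)
    fun t ht => ?_
  rw [interior_Ioi] at ht
  rw [(hderiv t ht).deriv]
  linarith [one_sub_inv_le_log_of_pos ht]

lemma two_mul_sub_one_le_add_one_mul_log {t : ℝ} (ht : 1 ≤ t) :
    2 * (t - 1) ≤ (t + 1) * log t := by
  have := monotoneOn_add_one_mul_log_sub_two_mul_sub_one (mem_Ioi.2 one_pos)
    (mem_Ioi.2 (one_pos.trans_le ht)) ht
  norm_num at this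
  linarith

lemma add_one_mul_log_le_two_mul_sub_one {t : ℝ} (ht₀ : 0 < t) (ht₁ : t ≤ 1) :
    (t + 1) * log t ≤ 2 * (t - 1) := by
  have := monotoneOn_add_one_mul_log_sub_two_mul_sub_one (mem_Ioi.2 ht₀) (mem_Ioi.2 one_pos) ht₁
  norm_num at this
  linarith

lemma three_mul_sq_sub_one_le_klFun {t : ℝ} (ht : 0 ≤ t) :
    3 * (t - 1) ^ 2 ≤ 2 * (t + 2) * klFun t := by
  set f : ℝ → ℝ := fun t => 2 * (t + 2) * klFun t - 3 * (t - 1) ^ 2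
  have hderiv : ∀ t : ℝ, t ≠ 0 → HasDerivAt f (4 * ((t + 1) * log t - 2 * (t - 1))) t := by
    intro t ht
    refine ((((hasDerivAt_id t).add_const 2).const_mul 2).fun_mul (hasDerivAt_klFun ht) |>.sub
      ((((hasDerivAt_id t).sub_const 1).pow 2).const_mul 3)).congr_deriv ?_
    simp only [klFun_apply, id]
    ring
  have hcont : Continuous f := by fun_prop
  have hmin : IsMinOn f (Ici 0) 1 := by
    refine isMinOn_Ici_of_deriv hcont.continuousAt hcont.continuousAt
      (fun x hx => (hderiv x hx.1.ne').differentiableAt.differentiableWithinAt)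
      (fun x hx => (hderiv x (one_pos.trans hx).ne').differentiableAt.differentiableWithinAt)
      (fun x hx => ?_) (fun x hx => ?_)
    · rw [(hderiv x hx.1.ne').deriv]
      linarith [add_one_mul_log_le_two_mul_sub_one hx.1 hx.2.le]
    · rw [(hderiv x (one_pos.trans hx).ne').deriv]
      linarith [two_mul_sub_one_le_add_one_mul_log (le_of_lt hx)]
  have := isMinOn_iff.1 hmin t ht
  simp only [f, klFun_one] at this
  linarith

lemma three_mul_sq_sub_le_mul_log_div {a b : ℝ} (ha : 0 ≤ a) (hb : 0 < b) :
    3 * (a - b) ^ 2 ≤ 2 * (a + 2 * b) * (a * log (a / b) - a + b) := by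
  obtain ⟨t, ht, rfl⟩ : ∃ t, 0 ≤ t ∧ a = t * b := ⟨a / b, by positivity, by field_simp⟩
  rw [mul_div_cancel_right₀ t hb.ne']
  calc 3 * (t * b - b) ^ 2 = b ^ 2 * (3 * (t - 1) ^ 2) := by ring
    _ ≤ b ^ 2 * (2 * (t + 2) * klFun t) :=
      mul_le_mul_of_nonneg_left (three_mul_sq_sub_one_le_klFun ht) (sq_nonneg b)
    _ = 2 * (t * b + 2 * b) * (t * b * log t - t * b + b) := by rw [klFun_apply]; ring

lemma mul_abs_sub_le_sq_mul_add_mul_log_div {a b : ℝ} (ha : 0 ≤ a) (hb : 0 ≤ b)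
    (hab : b = 0 → a = 0) (c : ℝ) :
    c * |a - b| ≤ c ^ 2 / 6 * (a + 2 * b) + (a * log (a / b) - a + b) := by
  rcases hb.eq_or_lt with rfl | hb
  · simp [hab rfl]
  have hw : 0 < a + 2 * b := by positivity
  have key := three_mul_sq_sub_le_mul_log_div ha hb
  rw [← sq_abs] at key
  have : 6 * (a + 2 * b) * (c * |a - b|) ≤
      6 * (a + 2 * b) * (c ^ 2 / 6 * (a + 2 * b) + (a * log (a / b) - a + b)) := by
    nlinarith [sq_nonneg (c * (a + 2 * b) - 3 * |a - b|)]
  exact le_of_mul_le_mul_left this (by linarith)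

theorem pinsker_inequality_general (Ω : Type*) [MeasurableSpace Ω] (μ : Measure Ω)
    (p q : Ω → ℝ)
    (hp0 : ∀ᵐ x ∂μ, 0 ≤ p x) (hq0 : ∀ᵐ x ∂μ, 0 ≤ q x)
    (hpi : Integrable p μ) (hqi : Integrable q μ)
    (hp1 : ∫ x, p x ∂μ = 1) (hq1 : ∫ x, q x ∂μ = 1)
    (hac : ∀ᵐ x ∂μ, q x = 0 → p x = 0)
    (hint : Integrable (fun x => p x * Real.log (p x / q x)) μ) :
    2 * ((1 / 2) * ∫ x, |p x - q x| ∂μ) ^ 2 ≤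
      ∫ x, p x * Real.log (p x / q x) ∂μ := by
  set A := ∫ x, |p x - q x| ∂μ
  set D := ∫ x, p x * log (p x / q x) ∂μ
  have hw : Integrable (fun x => p x + 2 * q x) μ := hpi.add (hqi.const_mul 2)
  have hk₀ : Integrable (fun x => p x * log (p x / q x) - p x) μ := hint.sub hpi
  have hk : Integrable (fun x => p x * log (p x / q x) - p x + q x) μ := hk₀.add hqi
  have hw_int : ∫ x, (p x + 2 * q x) ∂μ = 3 := by
    rw [integral_add hpi (hqi.const_mul 2), integral_const_mul, hp1, hq1]
    norm_num
  have hk_int : ∫ x, (p x * log (p x / q x) - p x + q x) ∂μ = D := by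
    rw [integral_add hk₀ hqi, integral_sub hint hpi, hp1, hq1]
    ring
  have h : ∫ x, A * |p x - q x| ∂μ ≤
      ∫ x, (A ^ 2 / 6 * (p x + 2 * q x) + (p x * log (p x / q x) - p x + q x)) ∂μ := by
    refine integral_mono_ae ((hpi.sub hqi).abs.const_mul A) ((hw.const_mul _).add hk) ?_
    filter_upwards [hp0, hq0, hac] with x hpx hqx hacx
    exact mul_abs_sub_le_sq_mul_add_mul_log_div hpx hqx hacx A
  rw [integral_const_mul, integral_add (hw.const_mul _) hk, integral_const_mul, hw_int,
    hk_int] at h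
  nlinarith

/-- Pinsker's inequality, in terms of densities `p, q` of probability measures with
respect to a common dominating σ-finite measure `μ`:
`D(P‖Q) = ∫ p log(p/q) dμ ≥ 2 ‖P - Q‖_TV² = 2 ((1/2) ∫ |p - q| dμ)²`, under the
absolute continuity condition `q = 0 → p = 0` a.e. -/
theorem pinsker_inequality (Ω : Type*) [MeasurableSpace Ω] (μ : Measure Ω)
    [SigmaFinite μ] (p q : Ω → ℝ) (hp : Measurable p) (hq : Measurable q)
    (hp0 : ∀ᵐ x ∂μ, 0 ≤ p x) (hq0 : ∀ᵐ x ∂μ, 0 ≤ q x)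
    (hpi : Integrable p μ) (hqi : Integrable q μ)
    (hp1 : ∫ x, p x ∂μ = 1) (hq1 : ∫ x, q x ∂μ = 1)
    (hac : ∀ᵐ x ∂μ, q x = 0 → p x = 0)
    (hint : Integrable (fun x => p x * Real.log (p x / q x)) μ) :
    2 * ((1 / 2) * ∫ x, |p x - q x| ∂μ) ^ 2 ≤
      ∫ x, p x * Real.log (p x / q x) ∂μ :=
  pinsker_inequality_general Ω μ p q hp0 hq0 hpi hqi hp1 hq1 hac hint
end
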